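/- Let D ≥ 3 be an integer and set c = D(D−1)/(D−2). For each integer n ≥ 1 define the function C_n : ℝ³ → ℝ by C_n(x,y,z) = x^n − Σ_{p=1}^{⌊n/2⌋} (2p−1)·binom(n,2p)·c^{2p}·x^{n−2p}·(4y)^p − Σ_{p=1}^{⌊(n−1)/2⌋} 16p·binom(n,2p+1)·c^{2p+1}·x^{n−2p−1}·(4y)^{p−1}·z. Then for every integer n ≥ 3 and all real x, y, z: (n−3)·C_n(x,y,z) = 2(n−2)·x·C_{n−1}(x,y,z) − (n−1)·C_2(x,y,z)·C_{n−2}(x,y,z). -/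

import Mathlib

/-!
The numbers `(i - 1) * choose n i * x ^ (n - i)` are the coefficients of
`W_n(t) = (t d/dt - 1) (x + t) ^ n = (x + t) ^ (n - 1) * ((n - 1) t - x)`, and these polynomials satisfy
`(n - 3) W_n = 2 (n - 2) x W_{n-1} - (n - 1) (x ^ 2 - t ^ 2) W_{n-2}`.
`C_n` is minus the image of `W_n` under the linear map sending `t ^ (2p)` to `c ^ (2p) (4y) ^ p` and
`t ^ (2p+1)` to `8 z c ^ (2p+1) (4y) ^ (p-1)`. Away from the coefficient of `t`, which vanishes in every
`W_n`, this map turns multiplication by `t ^ 2` into multiplication by `4 c ^ 2 y`, and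
`C_2 = x ^ 2 - 4 c ^ 2 y`; so the recurrence of the `W_n` becomes the claimed one. It is checked
coefficientwise, on even and odd powers of `t` separately.
-/

/-- The order-`n` Cosmological Gravity density `C^{(n)}` of dimension `D`, regarded as a
polynomial in the invariants `R → x`, `4·K₂ → 4y` (via `K₂ → y`), `K₃ → z`. -/
noncomputable def cosmoC (D n : ℕ) (x y z : ℝ) : ℝ :=
  x ^ n
    - ∑ p ∈ Finset.Icc 1 (n / 2),
        (2 * (p : ℝ) - 1) * (n.choose (2 * p) : ℝ) *
          ((D : ℝ) * ((D : ℝ) - 1) / ((D : ℝ) - 2)) ^ (2 * p) * x ^ (n - 2 * p) * (4 * y) ^ p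
    - ∑ p ∈ Finset.Icc 1 ((n - 1) / 2),
        16 * (p : ℝ) * (n.choose (2 * p + 1) : ℝ) *
          ((D : ℝ) * ((D : ℝ) - 1) / ((D : ℝ) - 2)) ^ (2 * p + 1) * x ^ (n - 2 * p - 1) *
          (4 * y) ^ (p - 1) * z

namespace CosmologicalGravity

open Finset

section BinomTerm

variable (x : ℝ)

def binomTerm (m i : ℕ) : ℝ := m.choose i * x ^ (m - i)

@[simp] lemma binomTerm_zero_right (m : ℕ) : binomTerm x m 0 = x ^ m := by
  simp [binomTerm]

lemma binomTerm_of_lt {m i : ℕ} (h : m < i) : binomTerm x m i = 0 := by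
  simp [binomTerm, Nat.choose_eq_zero_of_lt h]

lemma binomTerm_succ_succ (m i : ℕ) :
    binomTerm x (m + 1) (i + 1) = x * binomTerm x m (i + 1) + binomTerm x m i := by
  rcases lt_or_ge i m with h | h
  · obtain ⟨k, rfl⟩ := Nat.exists_eq_add_of_lt h
    simp only [binomTerm, Nat.choose_succ_succ, show i + k + 1 - i = k + 1 by omega,
      show i + k + 1 + 1 - (i + 1) = k + 1 by omega, show i + k + 1 - (i + 1) = k by omega]
    push_cast; ring
  · rw [binomTerm_of_lt x (show m < i + 1 by omega)]
    simp [binomTerm, Nat.choose_succ_succ, Nat.choose_eq_zero_of_lt (show m < i + 1 by omega),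
      show m + 1 - (i + 1) = m - i by omega]

lemma mul_binomTerm_succ (m i : ℕ) :
    x * (i + 1) * binomTerm x m (i + 1) = (m - i) * binomTerm x m i := by
  rcases lt_or_ge i m with h | h
  · have hchoose : (m.choose (i + 1) : ℝ) * (i + 1) = m.choose i * (m - i) := by
      rw [← Nat.cast_sub h.le]
      exact_mod_cast Nat.choose_succ_right_eq m i
    have hpow : x ^ (m - i) = x * x ^ (m - (i + 1)) := by
      rw [← pow_succ']; congr 1; omega
    simp only [binomTerm, hpow]
    linear_combination x * x ^ (m - (i + 1)) * hchoose
  · rw [binomTerm_of_lt x (show m < i + 1 by omega)]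
    rcases h.eq_or_lt with rfl | h
    · ring
    · rw [binomTerm_of_lt x h]; ring

def weightedBinomTerm (m i : ℕ) : ℝ := ((i : ℝ) - 1) * binomTerm x m i

lemma weightedBinomTerm_one (m : ℕ) : weightedBinomTerm x m 1 = 0 := by
  simp [weightedBinomTerm]

lemma weightedBinomTerm_recurrence (m i : ℕ) :
    ((m : ℝ) - 1) * weightedBinomTerm x (m + 2) (i + 2)
      = 2 * m * x * weightedBinomTerm x (m + 1) (i + 2)
        - (m + 1) * x ^ 2 * weightedBinomTerm x m (i + 2)
        + (m + 1) * weightedBinomTerm x m i := by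
  have h₁ := binomTerm_succ_succ x m (i + 1)
  have h₂ := binomTerm_succ_succ x (m + 1) (i + 1)
  have h₃ := binomTerm_succ_succ x m i
  have h₄ := mul_binomTerm_succ x m i
  simp only [weightedBinomTerm]
  push_cast
  linear_combination (↑i + 1) * (↑m - 1) * (h₂ + x * h₁ + h₃) - 2 * ↑m * (↑i + 1) * x * h₁ - 2 * h₄

lemma weightedBinomTerm_recurrence_of_lt_two {i : ℕ} (hi : i < 2) (m : ℕ) :
    ((m : ℝ) - 1) * weightedBinomTerm x (m + 2) i
      = 2 * m * x * weightedBinomTerm x (m + 1) i - (m + 1) * x ^ 2 * weightedBinomTerm x m i := by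
  interval_cases i
  · simp only [weightedBinomTerm, binomTerm_zero_right]; ring
  · simp only [weightedBinomTerm_one]; ring

def paritySum (a : ℕ → ℝ) (r K m : ℕ) : ℝ :=
  ∑ p ∈ range (K + 1), weightedBinomTerm x m (2 * p + r) * a p

lemma paritySum_recurrence (a : ℕ → ℝ) (q : ℝ) {r K m : ℕ} (hr : r < 2)
    (ha : ∀ p, 2 * p + r ≠ 1 → a (p + 1) = q * a p) (hK : m < 2 * K) :
    ((m : ℝ) - 1) * paritySum x a r K (m + 2)
      = 2 * m * x * paritySum x a r K (m + 1) - (m + 1) * (x ^ 2 - q) * paritySum x a r K m := by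
  have hterm : ∀ p ∈ range K,
      ((m : ℝ) - 1) * (weightedBinomTerm x (m + 2) (2 * (p + 1) + r) * a (p + 1))
        = 2 * m * x * (weightedBinomTerm x (m + 1) (2 * (p + 1) + r) * a (p + 1))
          - (m + 1) * x ^ 2 * (weightedBinomTerm x m (2 * (p + 1) + r) * a (p + 1))
          + (m + 1) * q * (weightedBinomTerm x m (2 * p + r) * a p) := by
    intro p _
    have hshift : weightedBinomTerm x m (2 * p + r) * a (p + 1)
        = q * (weightedBinomTerm x m (2 * p + r) * a p) := by
      by_cases h1 : 2 * p + r = 1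
      · simp [h1, weightedBinomTerm_one]
      · rw [ha p h1]; ring
    have hrec := weightedBinomTerm_recurrence x m (2 * p + r)
    rw [show 2 * p + r + 2 = 2 * (p + 1) + r by ring] at hrec
    linear_combination a (p + 1) * hrec + (m + 1) * hshift
  have htrunc : paritySum x a r K m = ∑ p ∈ range K, weightedBinomTerm x m (2 * p + r) * a p := by
    rw [paritySum, sum_range_succ, weightedBinomTerm,
      binomTerm_of_lt x (show m < 2 * K + r by omega), mul_zero, zero_mul, add_zero]
  have hsum := sum_congr rfl hterm
  rw [← mul_sum, sum_add_distrib, sum_sub_distrib, ← mul_sum, ← mul_sum, ← mul_sum, ← htrunc] at hsum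
  have hbase := weightedBinomTerm_recurrence_of_lt_two x hr m
  simp only [paritySum, sum_range_succ' _ K, mul_zero, zero_add] at hsum ⊢
  linear_combination hsum + a 0 * hbase

end BinomTerm

lemma sum_Icc_one_eq_sum_range_sub {M : Type*} [AddCommGroup M] {f g : ℕ → M} {N K : ℕ}
    (hNK : N ≤ K) (hfg : ∀ p ∈ Icc 1 N, f p = g p) (hg : ∀ p, N < p → g p = 0) :
    ∑ p ∈ Icc 1 N, f p = ∑ p ∈ range (K + 1), g p - g 0 := by
  rw [range_eq_Ico, sum_eq_sum_Ico_succ_bot K.succ_pos, add_sub_cancel_left, sum_congr rfl hfg]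
  refine sum_subset (Icc_subset_Icc_right hNK) fun p hp hpN => hg p ?_
  simp only [mem_Icc, mem_Ico] at hp hpN
  omega

noncomputable def cosmoConst (D : ℕ) : ℝ := D * (D - 1) / (D - 2)

noncomputable def evenCoeff (D : ℕ) (y : ℝ) (p : ℕ) : ℝ := cosmoConst D ^ (2 * p) * (4 * y) ^ p

-- The exponent `p - 1` is junk at `p = 0`; harmless, as that term is weighted by
-- `weightedBinomTerm x n 1 = 0`.
noncomputable def oddCoeff (D : ℕ) (y z : ℝ) (p : ℕ) : ℝ :=
  8 * z * cosmoConst D ^ (2 * p + 1) * (4 * y) ^ (p - 1)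

lemma evenCoeff_succ (D : ℕ) (y : ℝ) (p : ℕ) :
    evenCoeff D y (p + 1) = 4 * cosmoConst D ^ 2 * y * evenCoeff D y p := by
  simp only [evenCoeff]; ring

lemma oddCoeff_succ (D : ℕ) (y z : ℝ) {p : ℕ} (hp : p ≠ 0) :
    oddCoeff D y z (p + 1) = 4 * cosmoConst D ^ 2 * y * oddCoeff D y z p := by
  obtain ⟨q, rfl⟩ := Nat.exists_eq_succ_of_ne_zero hp
  simp only [oddCoeff, Nat.succ_sub_one]; ring

lemma cosmoC_eq_neg_paritySum (D n K : ℕ) (x y z : ℝ) (hK : n ≤ 2 * K) :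
    cosmoC D n x y z
      = -paritySum x (evenCoeff D y) 0 K n - paritySum x (oddCoeff D y z) 1 K n := by
  rw [cosmoC,
    sum_Icc_one_eq_sum_range_sub (g := fun p => weightedBinomTerm x n (2 * p) * evenCoeff D y p)
      (show n / 2 ≤ K by omega) ?even ?evenVanish,
    sum_Icc_one_eq_sum_range_sub (g := fun p => weightedBinomTerm x n (2 * p + 1) * oddCoeff D y z p)
      (show (n - 1) / 2 ≤ K by omega) ?odd ?oddVanish]
  · simp [paritySum, weightedBinomTerm, evenCoeff]
  case even =>
    intro p _
    simp only [weightedBinomTerm, binomTerm, evenCoeff, cosmoConst]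
    push_cast; ring
  case odd =>
    intro p _
    simp only [weightedBinomTerm, binomTerm, oddCoeff, cosmoConst, Nat.sub_sub]
    push_cast; ring
  case evenVanish =>
    intro p hp
    rw [weightedBinomTerm, binomTerm_of_lt x (by omega), mul_zero, zero_mul]
  case oddVanish =>
    intro p hp
    rw [weightedBinomTerm, binomTerm_of_lt x (by omega), mul_zero, zero_mul]

lemma cosmoC_two (D : ℕ) (x y z : ℝ) : cosmoC D 2 x y z = x ^ 2 - 4 * cosmoConst D ^ 2 * y := by
  simp [cosmoC, cosmoConst]
  ring

end CosmologicalGravity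

open CosmologicalGravity

theorem stmt_3 (D : ℕ) :
    ∀ n : ℕ, 3 ≤ n → ∀ x y z : ℝ,
      ((n : ℝ) - 3) * cosmoC D n x y z
        = 2 * ((n : ℝ) - 2) * x * cosmoC D (n - 1) x y z
          - ((n : ℝ) - 1) * cosmoC D 2 x y z * cosmoC D (n - 2) x y z := by
  intro n hn x y z
  obtain ⟨m, rfl⟩ : ∃ m, n = m + 2 := ⟨n - 2, by omega⟩
  have hEven := paritySum_recurrence x (evenCoeff D y) (4 * cosmoConst D ^ 2 * y)
    (K := m + 1) (m := m) two_pos (fun p _ => evenCoeff_succ D y p) (by omega)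
  have hOdd := paritySum_recurrence x (oddCoeff D y z) (4 * cosmoConst D ^ 2 * y)
    (K := m + 1) (m := m) one_lt_two (fun p hp => oddCoeff_succ D y z (by omega)) (by omega)
  rw [show m + 2 - 1 = m + 1 by omega, Nat.add_sub_cancel, cosmoC_two,
    cosmoC_eq_neg_paritySum D (m + 2) (m + 1) x y z (by omega),
    cosmoC_eq_neg_paritySum D (m + 1) (m + 1) x y z (by omega),
    cosmoC_eq_neg_paritySum D m (m + 1) x y z (by omega)]
  push_cast
  linear_combination -hEven - hOdd
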